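/- arXiv:2105.14795 — 4 statements merged into one kernel-verified Lean document; each statement's English description precedes it below -/
import Mathlib

section
/- Each of the 16 points (1/3)(±1,±1,±1,±1,±1) with an odd number of minus signs satisfies ε·x ≤ 1 for every even sign vector ε ∈ {±1}^5, with equality for exactly 5 such ε; hence each is a vertex of P^5 lying on exactly 5 facets. -/
/-- The sign `±1` encoded by a boolean: `true ↦ -1`, `false ↦ 1`. -/
def sgn (b : Bool) : ℝ := if b then -1 else 1

/-- The real vector in `{±1}^5` corresponding to a boolean sign vector. -/
def sv (ε : Fin 5 → Bool) : Fin 5 → ℝ := fun i => sgn (ε i)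

/-- A sign vector is *even* if it has an even number of `-1` entries. -/
def IsEvenSign (ε : Fin 5 → Bool) : Prop :=
  Even ((Finset.univ.filter fun i => ε i = true).card)

/-- Euclidean dot product on `ℝ^5`. -/
def dot (a x : Fin 5 → ℝ) : ℝ := ∑ i, a i * x i

/-- The right-angled polytope `P^5`, intersection of the half-spaces `ε ⬝ x ≤ 1`
over all even sign vectors `ε`. -/
def P5 : Set (Fin 5 → ℝ) := {x | ∀ ε, IsEvenSign ε → dot (sv ε) x ≤ 1}

/-- number of agreements -/
def agree (ε δ : Fin 5 → Bool) : ℕ := (Finset.univ.filter fun i => ε i = δ i).card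

lemma dot_eq (ε δ : Fin 5 → Bool) :
    dot (sv ε) (fun i => sv δ i / 3) = (2 * (agree ε δ : ℝ) - 5) / 3 := by
  have h : ∀ i, sv ε i * (sv δ i / 3) = ((if ε i = δ i then (2:ℝ) else 0) - 1) / 3 := by
    intro i
    unfold sv sgn
    cases hε : ε i <;> cases hδ : δ i <;> simp <;> ring
  unfold dot
  rw [Finset.sum_congr rfl (fun i _ => h i)]
  rw [← Finset.sum_div, Finset.sum_sub_distrib, Finset.sum_ite, Finset.sum_const,
    Finset.sum_const, Finset.sum_const]
  simp only [agree, smul_eq_mul, mul_zero, add_zero, Finset.card_univ, Fintype.card_fin]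
  ring

instance inst_s1 : DecidablePred IsEvenSign := fun ε => by unfold IsEvenSign; infer_instance

lemma key1 : ∀ δ ε : Fin 5 → Bool, ¬ IsEvenSign δ → IsEvenSign ε → agree ε δ ≤ 4 := by
  decide

lemma key2 : ∀ δ : Fin 5 → Bool, ¬ IsEvenSign δ →
    Fintype.card {ε : Fin 5 → Bool // IsEvenSign ε ∧ agree ε δ = 4} = 5 := by
  decide

/-- each point `(1/3)·δ`, where `δ ∈ {±1}^5` is an odd sign vector,
satisfies `ε ⬝ x ≤ 1` for every even sign vector `ε`, with equality for exactly 5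
of them; hence it is a vertex of `P^5` lying on exactly 5 facets. -/
theorem odd_third_points_are_vertices (δ : Fin 5 → Bool) (hδ : ¬ IsEvenSign δ) :
    (∀ ε, IsEvenSign ε → dot (sv ε) (fun i => sv δ i / 3) ≤ 1) ∧
    Nat.card {ε : Fin 5 → Bool //
      IsEvenSign ε ∧ dot (sv ε) (fun i => sv δ i / 3) = 1} = 5 := by
  constructor
  · intro ε hε
    rw [dot_eq]
    have := key1 δ ε hδ hε
    have : (agree ε δ : ℝ) ≤ 4 := by exact_mod_cast this
    linarith
  · have h : ∀ ε, (IsEvenSign ε ∧ dot (sv ε) (fun i => sv δ i / 3) = 1) ↔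
        (IsEvenSign ε ∧ agree ε δ = 4) := by
      intro ε
      rw [dot_eq]
      constructor
      · rintro ⟨h1, h2⟩
        refine ⟨h1, ?_⟩
        have : (agree ε δ : ℝ) = 4 := by linarith
        exact_mod_cast this
      · rintro ⟨h1, h2⟩
        rw [h2]
        exact ⟨h1, by norm_num⟩
    rw [Nat.card_congr (Equiv.subtypeEquivRight h), Nat.card_eq_fintype_card]
    exact key2 δ hδ
end

section
/- The group R_16 generated by the quaternionic maps L_q (q ∈ Q_8) and the involution ι acts freely and transitively on the set of 16 even sign vectors in {±1}^5 (where a linear map A acts on facet-vectors by ε ↦ A(ε), noting each L_q and ι sends even sign vectors to even sign vectors). -/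
/-- `L_1 = id` on `ℝ^5`. -/
def L1 : Function.End (Fin 5 → ℝ) := id
/-- `L_{-1} : (x₁,…,x₅) ↦ (-x₁,-x₂,-x₃,-x₄,x₅)`. -/
def Lm1 : Function.End (Fin 5 → ℝ) := fun x => ![-x 0, -x 1, -x 2, -x 3, x 4]
/-- `L_i : (x₁,…,x₅) ↦ (-x₂,x₁,-x₄,x₃,x₅)`. -/
def Li : Function.End (Fin 5 → ℝ) := fun x => ![-x 1, x 0, -x 3, x 2, x 4]
/-- `L_{-i} : (x₁,…,x₅) ↦ (x₂,-x₁,x₄,-x₃,x₅)`. -/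
def Lmi : Function.End (Fin 5 → ℝ) := fun x => ![x 1, -x 0, x 3, -x 2, x 4]
/-- `L_j : (x₁,…,x₅) ↦ (-x₃,x₄,x₁,-x₂,x₅)`. -/
def Lj : Function.End (Fin 5 → ℝ) := fun x => ![-x 2, x 3, x 0, -x 1, x 4]
/-- `L_{-j} : (x₁,…,x₅) ↦ (x₃,-x₄,-x₁,x₂,x₅)`. -/
def Lmj : Function.End (Fin 5 → ℝ) := fun x => ![x 2, -x 3, -x 0, x 1, x 4]
/-- `L_k : (x₁,…,x₅) ↦ (-x₄,-x₃,x₂,x₁,x₅)`. -/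
def Lk : Function.End (Fin 5 → ℝ) := fun x => ![-x 3, -x 2, x 1, x 0, x 4]
/-- `L_{-k} : (x₁,…,x₅) ↦ (x₄,x₃,-x₂,-x₁,x₅)`. -/
def Lmk : Function.End (Fin 5 → ℝ) := fun x => ![x 3, x 2, -x 1, -x 0, x 4]

/-- The eight quaternionic left-multiplication maps on `ℝ^5 = ℍ × ℝ`. -/
def Q8maps : Set (Function.End (Fin 5 → ℝ)) := {L1, Lm1, Li, Lmi, Lj, Lmj, Lk, Lmk}

/-- The involution `ι : (x₁,…,x₅) ↦ (x₁,-x₂,-x₄,-x₃,-x₅)`. -/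
def iota : Function.End (Fin 5 → ℝ) := fun x => ![x 0, -x 1, -x 3, -x 2, -x 4]

instance : DecidablePred IsEvenSign := fun _ =>
  inferInstanceAs (Decidable (Even _))

/-! ### Auxiliary machinery: signed permutations -/

/-- A signed permutation datum: a coordinate map and a sign-flip vector. -/
abbrev SP := (Fin 5 → Fin 5) × (Fin 5 → Bool)

/-- The endomorphism of `ℝ^5` associated to a signed permutation. -/
def toEnd (a : SP) : Function.End (Fin 5 → ℝ) := fun x i => sgn (a.2 i) * x (a.1 i)

/-- Composition at the level of signed permutation data. -/
def mulSP (a b : SP) : SP :=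
  (fun i => b.1 (a.1 i), fun i => xor (a.2 i) (b.2 (a.1 i)))

/-- Action of a signed permutation on boolean sign vectors. -/
def actSP (a : SP) (ε : Fin 5 → Bool) : Fin 5 → Bool := fun i => xor (a.2 i) (ε (a.1 i))

def sp1 : SP := (![0,1,2,3,4], ![false,false,false,false,false])
def spm1 : SP := (![0,1,2,3,4], ![true,true,true,true,false])
def spi : SP := (![1,0,3,2,4], ![true,false,true,false,false])
def spmi : SP := (![1,0,3,2,4], ![false,true,false,true,false])
def spj : SP := (![2,3,0,1,4], ![true,false,false,true,false])
def spmj : SP := (![2,3,0,1,4], ![false,true,true,false,false])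
def spk : SP := (![3,2,1,0,4], ![true,true,false,false,false])
def spmk : SP := (![3,2,1,0,4], ![false,false,true,true,false])
def spiota : SP := (![0,1,3,2,4], ![false,true,true,true,true])

def gensSP : List SP := [sp1, spm1, spi, spmi, spj, spmj, spk, spmk]

/-- The sixteen elements of `R₁₆` as signed permutations. -/
def S16 : List SP := gensSP ++ gensSP.map (fun a => mulSP a spiota)

lemma sgn_xor (p q : Bool) : sgn (xor p q) = sgn p * sgn q := by
  cases p <;> cases q <;> norm_num [sgn]

lemma toEnd_mul (a b : SP) : toEnd a * toEnd b = toEnd (mulSP a b) := by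
  funext x i
  simp [toEnd, mulSP, sgn_xor, Function.End.mul_def, Function.comp, mul_assoc]

lemma toEnd_act (a : SP) (ε : Fin 5 → Bool) : toEnd a (sv ε) = sv (actSP a ε) := by
  funext i
  simp [toEnd, sv, actSP, sgn_xor]

lemma sv_inj {α β : Fin 5 → Bool} (h : sv α = sv β) : α = β := by
  funext i
  have h' := congrFun h i
  simp only [sv] at h'
  cases hα : α i <;> cases hβ : β i <;> rw [hα, hβ] at h' <;> norm_num [sgn] at h' <;> rfl

lemma L1_eq : L1 = toEnd sp1 := by
  funext x i; fin_cases i <;> simp [L1, toEnd, sp1, sgn]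
lemma Lm1_eq : Lm1 = toEnd spm1 := by
  funext x i; fin_cases i <;> simp [Lm1, toEnd, spm1, sgn] <;> ring
lemma Li_eq : Li = toEnd spi := by
  funext x i; fin_cases i <;> simp [Li, toEnd, spi, sgn] <;> ring
lemma Lmi_eq : Lmi = toEnd spmi := by
  funext x i; fin_cases i <;> simp [Lmi, toEnd, spmi, sgn] <;> ring
lemma Lj_eq : Lj = toEnd spj := by
  funext x i; fin_cases i <;> simp [Lj, toEnd, spj, sgn] <;> ring
lemma Lmj_eq : Lmj = toEnd spmj := by
  funext x i; fin_cases i <;> simp [Lmj, toEnd, spmj, sgn] <;> ring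
lemma Lk_eq : Lk = toEnd spk := by
  funext x i; fin_cases i <;> simp [Lk, toEnd, spk, sgn] <;> ring
lemma Lmk_eq : Lmk = toEnd spmk := by
  funext x i; fin_cases i <;> simp [Lmk, toEnd, spmk, sgn] <;> ring
lemma iota_eq : iota = toEnd spiota := by
  funext x i; fin_cases i <;> simp [iota, toEnd, spiota, sgn] <;> ring

lemma S16_closed : ∀ a ∈ S16, ∀ b ∈ S16, mulSP a b ∈ S16 := by
  intro a ha b hb
  fin_cases ha <;> fin_cases hb <;> decide

lemma S16_free : ∀ a ∈ S16, ∀ b ∈ S16, ∀ ε : Fin 5 → Bool, IsEvenSign ε →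
    actSP a ε = actSP b ε → a = b := by
  intro a ha b hb
  fin_cases ha <;> fin_cases hb <;> decide

lemma S16_trans : ∀ ε ε' : Fin 5 → Bool, IsEvenSign ε → IsEvenSign ε' →
    ∃ a ∈ S16, actSP a ε = ε' := by decide

lemma S16_preserve : ∀ a ∈ S16, ∀ ε : Fin 5 → Bool, IsEvenSign ε →
    IsEvenSign (actSP a ε) := by
  intro a ha
  fin_cases ha <;> decide

lemma gens_mem_closure : ∀ a ∈ gensSP, toEnd a ∈ Submonoid.closure (Q8maps ∪ {iota}) := by
  intro a ha
  simp only [gensSP, List.mem_cons, List.not_mem_nil, or_false] at ha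
  rcases ha with rfl | rfl | rfl | rfl | rfl | rfl | rfl | rfl <;>
    refine Submonoid.subset_closure (Or.inl ?_)
  · rw [← L1_eq]; simp [Q8maps]
  · rw [← Lm1_eq]; simp [Q8maps]
  · rw [← Li_eq]; simp [Q8maps]
  · rw [← Lmi_eq]; simp [Q8maps]
  · rw [← Lj_eq]; simp [Q8maps]
  · rw [← Lmj_eq]; simp [Q8maps]
  · rw [← Lk_eq]; simp [Q8maps]
  · rw [← Lmk_eq]; simp [Q8maps]

lemma S16_mem_closure : ∀ a ∈ S16, toEnd a ∈ Submonoid.closure (Q8maps ∪ {iota}) := by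
  intro a ha
  rcases List.mem_append.1 ha with h | h
  · exact gens_mem_closure a h
  · obtain ⟨g, hg, rfl⟩ := List.mem_map.1 h
    rw [← toEnd_mul]
    exact mul_mem (gens_mem_closure g hg)
      (Submonoid.subset_closure (Or.inr (by rw [iota_eq]; rfl)))

lemma closure_sub : ∀ f ∈ Submonoid.closure (Q8maps ∪ {iota}), ∃ a ∈ S16, f = toEnd a := by
  intro f hf
  induction hf using Submonoid.closure_induction with
  | mem g hg =>
    rcases hg with hg | hg
    · simp only [Q8maps, Set.mem_insert_iff, Set.mem_singleton_iff] at hg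
      rcases hg with rfl | rfl | rfl | rfl | rfl | rfl | rfl | rfl
      · exact ⟨sp1, by decide, L1_eq⟩
      · exact ⟨spm1, by decide, Lm1_eq⟩
      · exact ⟨spi, by decide, Li_eq⟩
      · exact ⟨spmi, by decide, Lmi_eq⟩
      · exact ⟨spj, by decide, Lj_eq⟩
      · exact ⟨spmj, by decide, Lmj_eq⟩
      · exact ⟨spk, by decide, Lk_eq⟩
      · exact ⟨spmk, by decide, Lmk_eq⟩
    · rcases hg with rfl
      exact ⟨spiota, by decide, iota_eq⟩
  | one => exact ⟨sp1, by decide, L1_eq⟩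
  | mul f g _ _ hf' hg' =>
    obtain ⟨a, ha, rfl⟩ := hf'
    obtain ⟨b, hb, rfl⟩ := hg'
    exact ⟨mulSP a b, S16_closed a ha b hb, toEnd_mul a b⟩

/-- the group `R₁₆` generated by the maps `L_q` (`q ∈ Q₈`) and `ι`
sends even sign vectors to even sign vectors, and acts freely and transitively
on the set of 16 even sign vectors of `{±1}^5` (the facet vectors of `P^5`):
for any two even sign vectors there is a unique element of `R₁₆` carrying the
first to the second. -/
theorem R16_acts_freely_transitively_on_facets :
    (∀ f ∈ Submonoid.closure (Q8maps ∪ {iota}),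
      ∀ ε : Fin 5 → Bool, IsEvenSign ε →
        ∃ ε', IsEvenSign ε' ∧ f (sv ε) = sv ε') ∧
    (∀ ε ε' : Fin 5 → Bool, IsEvenSign ε → IsEvenSign ε' →
      ∃! f : Function.End (Fin 5 → ℝ),
        f ∈ Submonoid.closure (Q8maps ∪ {iota}) ∧ f (sv ε) = sv ε') := by
  constructor
  · intro f hf ε hε
    obtain ⟨a, ha, rfl⟩ := closure_sub f hf
    exact ⟨actSP a ε, S16_preserve a ha ε hε, toEnd_act a ε⟩
  · intro ε ε' hε hε'
    obtain ⟨a, ha, hact⟩ := S16_trans ε ε' hε hε'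
    refine ⟨toEnd a, ⟨S16_mem_closure a ha, by rw [toEnd_act, hact]⟩, ?_⟩
    rintro g ⟨hg, hgε⟩
    obtain ⟨b, hb, rfl⟩ := closure_sub g hg
    have hb' : actSP b ε = actSP a ε := by
      apply sv_inj
      rw [← toEnd_act, hgε, ← hact]
    rw [S16_free b hb a ha ε hε hb']
end

section
/- Let G be a torsion-free hyperbolic group, f : G → Z a surjective homomorphism, H = ker f, and α ∈ G with f(α) a generator of Z. If H is not infinite cyclic and the centralizer of every nontrivial element of G is cyclic, then for every k ≠ 0 the conjugation automorphism g ↦ α^k g α^{-k} of H is not inner; hence Out(H) is infinite. -/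
/-- let `G` be a torsion-free (hyperbolic) group, `f : G → ℤ` a
surjective homomorphism with kernel `H`, and `α ∈ G` mapping to a generator of
`ℤ`.  Assume (as holds in torsion-free hyperbolic groups) that the centralizer
of every nontrivial element of `G` is infinite cyclic, and that `H` is not
cyclic.  Then for every `k ≠ 0` the conjugation automorphism `g ↦ αᵏ g α⁻ᵏ` of
`H` is not inner; hence `Out(H) = MulAut H / Inn H` is infinite. -/
theorem conjugation_not_inner_and_Out_infinite
    {G : Type*} [Group G] (f : G →* Multiplicative ℤ)
    (hf : Function.Surjective f)
    (htf : ∀ g : G, g ≠ 1 → ¬ IsOfFinOrder g)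
    (hcent : ∀ g : G, g ≠ 1 →
      IsCyclic (Subgroup.centralizer {g}) ∧ Infinite (Subgroup.centralizer {g}))
    (α : G) (hα : f α = Multiplicative.ofAdd 1)
    (hH : ¬ IsCyclic f.ker) :
    (∀ k : ℤ, k ≠ 0 →
      ¬ ∃ β : f.ker, ∀ g : f.ker,
        α ^ k * (g : G) * α ^ (-k) = (β : G) * (g : G) * (β : G)⁻¹) ∧
    Infinite (MulAut f.ker ⧸ (MulAut.conj : f.ker →* MulAut f.ker).range) := by
  have key : ∀ k : ℤ, k ≠ 0 →
      ¬ ∃ β : f.ker, ∀ g : f.ker,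
        α ^ k * (g : G) * α ^ (-k) = (β : G) * (g : G) * (β : G)⁻¹ := by
    rintro k hk ⟨β, hβ⟩
    set γ : G := (β : G)⁻¹ * α ^ k with hγdef
    have hcomm : ∀ g ∈ f.ker, γ * g = g * γ := by
      intro g hg
      have h := hβ ⟨g, hg⟩
      simp only [Subgroup.coe_mk] at h
      calc (β : G)⁻¹ * α ^ k * g
          = (β : G)⁻¹ * (α ^ k * g * α ^ (-k)) * α ^ k := by group
        _ = (β : G)⁻¹ * ((β : G) * g * (β : G)⁻¹) * α ^ k := by rw [h]
        _ = g * ((β : G)⁻¹ * α ^ k) := by group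
    by_cases hγ : γ = 1
    · have hβα : (β : G) = α ^ k := by
        have := hγ
        rw [hγdef, inv_mul_eq_one] at this
        exact this
      have hmem : (α : G) ^ k ∈ f.ker := hβα ▸ β.2
      rw [MonoidHom.mem_ker, map_zpow, hα] at hmem
      have : (k : ℤ) = 0 := by
        have := congrArg Multiplicative.toAdd hmem
        simpa using this
      exact hk this
    · have hle : f.ker ≤ Subgroup.centralizer {γ} := by
        intro g hg
        rw [Subgroup.mem_centralizer_iff]
        rintro x rfl
        exact hcomm g hg
      haveI : IsCyclic (Subgroup.centralizer {γ}) := (hcent γ hγ).1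
      haveI : IsCyclic (f.ker.subgroupOf (Subgroup.centralizer {γ})) :=
        Subgroup.isCyclic _
      exact hH (isCyclic_of_surjective _
        (Subgroup.subgroupOfEquivOfLe hle).surjective)
  refine ⟨key, ?_⟩
  haveI : f.ker.Normal := f.normal_ker
  have hinj : Function.Injective
      (fun k : ℤ => (QuotientGroup.mk (MulAut.conjNormal (α ^ k)) :
        MulAut f.ker ⧸ (MulAut.conj : f.ker →* MulAut f.ker).range)) := by
    intro k j h
    by_contra hne
    rw [QuotientGroup.eq] at h
    have hmem : (MulAut.conjNormal (α ^ (j - k)) : MulAut f.ker) ∈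
        (MulAut.conj : f.ker →* MulAut f.ker).range := by
      have : (MulAut.conjNormal (α ^ k) : MulAut f.ker)⁻¹ *
          MulAut.conjNormal (α ^ j) = MulAut.conjNormal (α ^ (j - k)) := by
        rw [← map_inv, ← map_mul, ← zpow_neg, ← zpow_add]
        ring_nf
      rwa [this] at h
    obtain ⟨β, hβ⟩ := hmem
    apply key (j - k) (sub_ne_zero.mpr (Ne.symm hne))
    refine ⟨β, fun g => ?_⟩
    have h2 := congrArg (fun e : MulAut f.ker => ((e g : f.ker) : G)) hβ
    simp only [MulAut.conj_apply, MulAut.conjNormal_apply] at h2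
    rw [zpow_neg]
    push_cast at h2
    rw [← h2]
  exact Infinite.of_injective _ hinj
end

section
/- Every torsion-free group that is virtually cyclic is cyclic. -/
open Subgroup

/-- Torsion-freeness passes to subgroups. -/
private lemma tf_subgroup {G : Type*} [Group G]
    (htf : ∀ g : G, g ≠ 1 → ¬ IsOfFinOrder g) (K : Subgroup G) :
    ∀ x : K, x ≠ 1 → ¬ IsOfFinOrder x := by
  intro x hx hfin
  refine htf (x : G) ?_ (K.subtype.isOfFinOrder hfin)
  intro h
  exact hx (Subtype.ext h)

/-- A group injecting into a cyclic group is cyclic. -/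
private lemma isCyclic_of_injective' {G H : Type*} [Group G] [Group H] [IsCyclic H]
    (f : G →* H) (hf : Function.Injective f) : IsCyclic G := by
  have e := MonoidHom.ofInjective hf
  exact isCyclic_of_surjective e.symm e.symm.surjective

/-- Conjugation sends an infinite-order generator of a normal subgroup to itself
or its inverse. -/
private lemma conj_gen_eq_or {G : Type*} [Group G] {N : Subgroup G} [hN : N.Normal]
    {g : G} (hg : Subgroup.zpowers g = N) (hinf : ¬ IsOfFinOrder g) (x : G) :
    x * g * x⁻¹ = g ∨ x * g * x⁻¹ = g⁻¹ := by
  have hgN : g ∈ N := hg ▸ Subgroup.mem_zpowers g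
  have h1 : x * g * x⁻¹ ∈ Subgroup.zpowers g := by rw [hg]; exact hN.conj_mem g hgN x
  have h2 : x⁻¹ * g * x ∈ Subgroup.zpowers g := by
    rw [hg]; simpa using hN.conj_mem g hgN x⁻¹
  obtain ⟨k, hk⟩ := Subgroup.mem_zpowers_iff.mp h1
  obtain ⟨m, hm⟩ := Subgroup.mem_zpowers_iff.mp h2
  have hkm : g ^ (k * m) = g ^ (1 : ℤ) := by
    have : x * (x⁻¹ * g * x) * x⁻¹ = g := by group
    calc g ^ (k * m) = (g ^ k) ^ m := by rw [zpow_mul]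
    _ = (x * g * x⁻¹) ^ m := by rw [hk]
    _ = x * g ^ m * x⁻¹ := conj_zpow
    _ = x * (x⁻¹ * g * x) * x⁻¹ := by rw [hm]
    _ = g ^ (1 : ℤ) := by rw [this, zpow_one]
  have hkm1 : k * m = 1 := injective_zpow_iff_not_isOfFinOrder.mpr hinf hkm
  rcases Int.eq_one_or_neg_one_of_mul_eq_one hkm1 with h | h
  · left; rw [← hk, h, zpow_one]
  · right; rw [← hk, h, zpow_neg, zpow_one]

/-- every torsion-free virtually cyclic group is cyclic. -/
theorem torsion_free_virtually_cyclic_is_cyclic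
    {G : Type*} [Group G]
    (htf : ∀ g : G, g ≠ 1 → ¬ IsOfFinOrder g)
    (hvc : ∃ H : Subgroup G, IsCyclic H ∧ H.index ≠ 0) :
    IsCyclic G := by
  obtain ⟨H, hHcyc, hHidx⟩ := hvc
  haveI : H.FiniteIndex := ⟨hHidx⟩
  set N := H.normalCore with hNdef
  haveI : N.FiniteIndex := Subgroup.finiteIndex_normalCore H
  haveI : IsCyclic N := Subgroup.isCyclic_of_le H.normalCore_le
  by_cases hNbot : N = ⊥
  · -- then G is finite, hence trivial by torsion-freeness
    have hfin : Finite G := by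
      have : N.index ≠ 0 := Subgroup.FiniteIndex.index_ne_zero
      rw [hNbot, Subgroup.index_bot] at this
      exact (Nat.card_ne_zero.mp this).2
    have : Subsingleton G := by
      constructor
      intro a b
      have ha : a = 1 := by
        by_contra h
        exact htf a h (isOfFinOrder_of_finite a)
      have hb : b = 1 := by
        by_contra h
        exact htf b h (isOfFinOrder_of_finite b)
      rw [ha, hb]
    exact isCyclic_of_subsingleton
  · -- main case: N is infinite cyclic
    obtain ⟨c₀, hc₀⟩ := (inferInstance : IsCyclic N).exists_generator
    set g : G := (c₀ : G) with hgdef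
    have hgN : Subgroup.zpowers g = N := by
      apply le_antisymm
      · exact Subgroup.zpowers_le.mpr c₀.2
      · intro n hn
        obtain ⟨k, hk⟩ := Subgroup.mem_zpowers_iff.mp (hc₀ ⟨n, hn⟩)
        exact Subgroup.mem_zpowers_iff.mpr ⟨k, by
          have := congrArg (Subtype.val) hk
          simpa using this⟩
    have hg1 : g ≠ 1 := by
      intro h
      apply hNbot
      rw [← hgN, h]
      simp [Subgroup.zpowers_one_eq_bot]
    have hginf : ¬ IsOfFinOrder g := htf g hg1
    -- the centralizer of g
    set K : Subgroup G := Subgroup.centralizer {g} with hKdef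
    have hgK : g ∈ K := Subgroup.mem_centralizer_singleton_iff.mpr rfl
    have hNK : N ≤ K := by
      rw [← hgN]
      intro n hn
      obtain ⟨k, hk⟩ := Subgroup.mem_zpowers_iff.mp hn
      rw [← hk]
      exact Subgroup.mem_centralizer_singleton_iff.mpr ((Commute.refl g).zpow_left k).eq
    -- N sits in the center of K
    have hNZ : N.subgroupOf K ≤ Subgroup.center K := by
      intro y hy
      rw [Subgroup.mem_subgroupOf] at hy
      rw [Subgroup.mem_center_iff]
      intro z
      have hyg : (y : G) ∈ Subgroup.zpowers g := hgN ▸ hy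
      obtain ⟨k, hk⟩ := Subgroup.mem_zpowers_iff.mp hyg
      have hz : Commute (z : G) g := Subgroup.mem_centralizer_singleton_iff.mp z.2
      apply Subtype.ext
      push_cast
      rw [← hk]
      exact (hz.zpow_right k).eq
    -- index bookkeeping
    have hNKidx : (N.subgroupOf K).index ≠ 0 := by
      intro h0
      apply (inferInstance : N.FiniteIndex).index_ne_zero
      rw [← Subgroup.relIndex_mul_index hNK]
      have : N.relIndex K = (N.subgroupOf K).index := rfl
      rw [this, h0, zero_mul]
    haveI : (Subgroup.center K).FiniteIndex := by
      constructor
      intro h0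
      have hd := Subgroup.index_dvd_of_le hNZ
      rw [h0] at hd
      exact hNKidx (zero_dvd_iff.mp hd)
    -- cyclicity bookkeeping
    haveI : IsCyclic (N.subgroupOf K) := by
      have e := Subgroup.subgroupOfEquivOfLe hNK
      exact isCyclic_of_surjective e.symm e.symm.surjective
    set M : Subgroup (Subgroup.center K) := (N.subgroupOf K).subgroupOf (Subgroup.center K)
      with hMdef
    haveI : IsCyclic M := by
      have e := Subgroup.subgroupOfEquivOfLe hNZ
      exact isCyclic_of_surjective e.symm e.symm.surjective
    have hMidx : M.index ≠ 0 := by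
      intro h0
      apply hNKidx
      rw [← Subgroup.relIndex_mul_index hNZ]
      have : (N.subgroupOf K).relIndex (Subgroup.center K) = M.index := rfl
      rw [this, h0, zero_mul]
    -- the center of K is commutative
    have hcomm : ∀ a b : Subgroup.center K, a * b = b * a := by
      intro a b
      apply Subtype.ext
      push_cast
      exact Subgroup.mem_center_iff.mp b.2 a.1
    haveI : M.Normal := by
      constructor
      intro n hn x
      have : x * n * x⁻¹ = n := by rw [hcomm x n]; group
      rwa [this]
    -- the power map into M
    have hpow : ∀ x : Subgroup.center K, x ^ M.index ∈ M := fun x => M.pow_index_mem x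
    let ψ : (Subgroup.center K) →* M :=
      { toFun := fun x => ⟨x ^ M.index, hpow x⟩
        map_one' := Subtype.ext (one_pow M.index)
        map_mul' := fun x y => Subtype.ext (Commute.mul_pow (hcomm x y) M.index) }
    have hψinj : Function.Injective ψ := by
      rw [injective_iff_map_eq_one]
      intro x hx
      have hx' : x ^ M.index = 1 := by
        have := congrArg (Subtype.val) hx
        simpa [ψ] using this
      by_contra hx1
      exact tf_subgroup (tf_subgroup htf K) (Subgroup.center K) x hx1
        (isOfFinOrder_iff_pow_eq_one.mpr ⟨M.index, Nat.pos_of_ne_zero hMidx, hx'⟩)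
    haveI : IsCyclic (Subgroup.center K) := isCyclic_of_injective' ψ hψinj
    -- transfer: K embeds into its center, hence K is cyclic
    have htinj : Function.Injective (MonoidHom.transferCenterPow K) := by
      rw [injective_iff_map_eq_one]
      intro x hx
      have hx' : x ^ (Subgroup.center K).index = 1 := by
        have := congrArg (Subtype.val) hx
        simpa using this
      by_contra hx1
      exact tf_subgroup htf K x hx1
        (isOfFinOrder_iff_pow_eq_one.mpr
          ⟨(Subgroup.center K).index,
            Nat.pos_of_ne_zero (inferInstance : (Subgroup.center K).FiniteIndex).index_ne_zero,
            hx'⟩)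
    haveI hKcyc : IsCyclic K := isCyclic_of_injective' (MonoidHom.transferCenterPow K) htinj
    -- a generator of K
    obtain ⟨c₁, hc₁⟩ := hKcyc.exists_generator
    set c : G := (c₁ : G) with hcdef
    have hcK : Subgroup.zpowers c = K := by
      apply le_antisymm
      · exact Subgroup.zpowers_le.mpr c₁.2
      · intro n hn
        obtain ⟨k, hk⟩ := Subgroup.mem_zpowers_iff.mp (hc₁ ⟨n, hn⟩)
        exact Subgroup.mem_zpowers_iff.mpr ⟨k, by
          have := congrArg (Subtype.val) hk
          simpa using this⟩
    have hc1 : c ≠ 1 := by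
      intro h
      have : g ∈ Subgroup.zpowers c := hcK ▸ hgK
      obtain ⟨k, hk⟩ := Subgroup.mem_zpowers_iff.mp this
      apply hg1
      rw [← hk, h, one_zpow]
    have hcinf : ¬ IsOfFinOrder c := htf c hc1
    -- K is normal in G
    haveI hKnormal : K.Normal := by
      constructor
      intro n hn x
      have hng : Commute n g := Subgroup.mem_centralizer_singleton_iff.mp hn
      have hconj : Commute (x * n * x⁻¹) (x * g * x⁻¹) := by
        have := hng.map (MulAut.conj x).toMonoidHom
        simpa [MulAut.conj_apply] using this
      rcases conj_gen_eq_or hgN hginf x with h | h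
      · rw [h] at hconj
        exact Subgroup.mem_centralizer_singleton_iff.mpr hconj.eq
      · rw [h] at hconj
        have := hconj.inv_right
        rw [inv_inv] at this
        exact Subgroup.mem_centralizer_singleton_iff.mpr this.eq
    -- finally, K = ⊤
    have hKtop : K = ⊤ := by
      rw [Subgroup.eq_top_iff']
      intro x
      rcases conj_gen_eq_or hgN hginf x with h | h
      · rw [Subgroup.mem_centralizer_singleton_iff]
        rw [mul_inv_eq_iff_eq_mul] at h
        exact h
      · exfalso
        rcases conj_gen_eq_or hcK hcinf x with h' | h'
        · -- x commutes with c hence with g, contradicting h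
          have hxc : Commute x c := by
            rw [mul_inv_eq_iff_eq_mul] at h'
            exact h'
          have hgc : g ∈ Subgroup.zpowers c := hcK ▸ hgK
          obtain ⟨k, hk⟩ := Subgroup.mem_zpowers_iff.mp hgc
          have hxg : Commute x g := by rw [← hk]; exact hxc.zpow_right k
          have hxgx : x * g * x⁻¹ = g := by rw [hxg.eq]; group
          have hgg : g = g⁻¹ := by rw [← h, hxgx]
          apply hginf
          refine isOfFinOrder_iff_pow_eq_one.mpr ⟨2, two_pos, ?_⟩
          rw [pow_two]
          exact mul_eq_one_iff_eq_inv.mpr hgg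
        · -- x inverts both g and c; then x² is central and inverted, so x = 1
          have hx2K : x ^ 2 ∈ K := by
            rw [Subgroup.mem_centralizer_singleton_iff]
            have h1 : x * g = g⁻¹ * x := by
              rw [mul_inv_eq_iff_eq_mul] at h; rw [h]
            rw [pow_two]
            calc x * x * g = x * (x * g) := by rw [mul_assoc]
            _ = x * (g⁻¹ * x) := by rw [h1]
            _ = (x * g⁻¹ * x⁻¹) * (x * x) := by group
            _ = g * (x * x) := by
                  rw [show x * g⁻¹ * x⁻¹ = (x * g * x⁻¹)⁻¹ by group, h, inv_inv]
          obtain ⟨t, ht⟩ := Subgroup.mem_zpowers_iff.mp (hcK ▸ hx2K : x ^ 2 ∈ Subgroup.zpowers c)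
          have key : x * (x ^ 2) * x⁻¹ = (x ^ 2)⁻¹ := by
            rw [← ht, ← conj_zpow, h', inv_zpow]
          have hx4 : x ^ 2 * x ^ 2 = 1 := by
            have : x * x ^ 2 * x⁻¹ = x ^ 2 := by group
            rw [this] at key
            exact mul_eq_one_iff_eq_inv.mpr key
          have hx1 : x = 1 := by
            by_contra hx1
            apply htf x hx1
            refine isOfFinOrder_iff_pow_eq_one.mpr ⟨4, by norm_num, ?_⟩
            calc x ^ 4 = x ^ 2 * x ^ 2 := by rw [show (4:ℕ) = 2 + 2 from rfl, pow_add]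
            _ = 1 := hx4
          rw [hx1] at h
          apply hginf
          refine isOfFinOrder_iff_pow_eq_one.mpr ⟨2, two_pos, ?_⟩
          have hgg : g = g⁻¹ := by simpa using h
          rw [pow_two]
          exact mul_eq_one_iff_eq_inv.mpr hgg
    rw [hKtop] at hKcyc
    exact isCyclic_of_surjective Subgroup.topEquiv Subgroup.topEquiv.surjective
end
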